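/- arXiv:1402.2242 — 4 statements merged into one kernel-verified Lean document; each statement's English description precedes it below -/
import Mathlib

section
/- For all s, t ∈ ℝ the map j_t is a well-defined linear isometry from L²(μ) into L²(λ⊗μ), and for all f, g ∈ L²(μ) one has ⟨j_s f, j_t g⟩_{L²(λ⊗μ)} = ∫_M e^{−|s−t| ω(k)} \overline{f(k)} g(k) dμ(k); equivalently, the adjoint relation j_s^* j_t f = e^{−|s−t|ω} f holds for all f ∈ L²(μ). -/
/-!
The real prefactor of `j_t f` at `(k₀, k)` is the square root of the Cauchy density
`P_c(k₀) = c / (π (c² + k₀²))` of scale `c = ω(k)`. Hence `|j_t f|²` integrates in `k₀` to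
`|f(k)|²` (Fubini–Tonelli gives the isometry), and `conj (j_s f) * j_t g` integrates in `k₀`
to the characteristic function of `P_{ω(k)}` at `s - t`, namely `e^{-|s-t| ω(k)}`, times
`conj (f k) * g k`. That characteristic function is computed by Fourier inversion of the
two-sided exponential `e^{-c|x|}`, whose Fourier transform is elementary and is a rescaled Cauchy
density.
-/

open MeasureTheory

/-- Nelson's embedding `j_t : L²(μ) → L²(λ⊗μ)`, written pointwise:
`(j_t f)(k₀,k) = π^{-1/2} e^{-i t k₀} ω(k)^{1/2} (ω(k)² + k₀²)^{-1/2} f(k)`,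
where the real prefactor is expressed as `√(ω(k) / (π (ω(k)² + k₀²)))`. -/
noncomputable def nelsonJ {M : Type*} (ω : M → ℝ) (t : ℝ) (f : M → ℂ) : ℝ × M → ℂ :=
  fun p =>
    (Real.sqrt (ω p.2 / (Real.pi * ((ω p.2) ^ 2 + p.1 ^ 2))) : ℂ) *
      Complex.exp (-(Complex.I * (t : ℂ) * (p.1 : ℂ))) * f p.2

open Complex Set ProbabilityTheory
open scoped Real NNReal FourierTransform

section TwoSidedExponential

variable {c : ℝ} (b : ℝ)

lemma exp_mul_I_mul_exp_neg_mul_abs_eqOn_Ioi :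
    EqOn (fun x : ℝ => cexp (b * x * I) * rexp (-(c * |x|)))
      (fun x : ℝ => cexp ((b * I - c) * x)) (Ioi 0) := by
  intro x hx
  simp only [abs_of_pos (show (0:ℝ) < x from hx), ofReal_exp, ← Complex.exp_add]
  push_cast
  ring_nf

lemma exp_mul_I_mul_exp_neg_mul_abs_eqOn_Iic :
    EqOn (fun x : ℝ => cexp (b * x * I) * rexp (-(c * |x|)))
      (fun x : ℝ => cexp ((b * I + c) * x)) (Iic 0) := by
  intro x hx
  simp only [abs_of_nonpos (show x ≤ 0 from hx), ofReal_exp, ← Complex.exp_add]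
  push_cast
  ring_nf

lemma integrableOn_Ioi_exp_mul_I_mul_exp_neg_mul_abs (hc : 0 < c) :
    IntegrableOn (fun x : ℝ => cexp (b * x * I) * rexp (-(c * |x|))) (Ioi 0) :=
  (integrableOn_exp_mul_complex_Ioi (by simpa using hc) 0).congr_fun
    (exp_mul_I_mul_exp_neg_mul_abs_eqOn_Ioi b).symm measurableSet_Ioi

lemma integrableOn_Iic_exp_mul_I_mul_exp_neg_mul_abs (hc : 0 < c) :
    IntegrableOn (fun x : ℝ => cexp (b * x * I) * rexp (-(c * |x|))) (Iic 0) :=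
  (integrableOn_exp_mul_complex_Iic (by simpa using hc) 0).congr_fun
    (exp_mul_I_mul_exp_neg_mul_abs_eqOn_Iic b).symm measurableSet_Iic

lemma integrable_exp_mul_I_mul_exp_neg_mul_abs (hc : 0 < c) :
    Integrable (fun x : ℝ => cexp (b * x * I) * rexp (-(c * |x|))) := by
  simpa using (integrableOn_Iic_exp_mul_I_mul_exp_neg_mul_abs b hc).union
    (integrableOn_Ioi_exp_mul_I_mul_exp_neg_mul_abs b hc)

lemma integral_exp_mul_I_mul_exp_neg_mul_abs (hc : 0 < c) :
    ∫ x : ℝ, cexp (b * x * I) * rexp (-(c * |x|)) = 2 * c / (c ^ 2 + b ^ 2) := by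
  have hplus : (b * I + c : ℂ) ≠ 0 := fun h => by simpa [hc.ne'] using congrArg re h
  have hminus : (b * I - c : ℂ) ≠ 0 := fun h => by simpa [hc.ne'] using congrArg re h
  have hsum : (c ^ 2 + b ^ 2 : ℂ) ≠ 0 := by
    exact_mod_cast (by positivity : (0 : ℝ) < c ^ 2 + b ^ 2).ne'
  rw [← intervalIntegral.integral_Iic_add_Ioi
      (integrableOn_Iic_exp_mul_I_mul_exp_neg_mul_abs b hc)
      (integrableOn_Ioi_exp_mul_I_mul_exp_neg_mul_abs b hc),
    setIntegral_congr_fun measurableSet_Iic (exp_mul_I_mul_exp_neg_mul_abs_eqOn_Iic b),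
    setIntegral_congr_fun measurableSet_Ioi (exp_mul_I_mul_exp_neg_mul_abs_eqOn_Ioi b),
    integral_exp_mul_complex_Iic (by simpa using hc),
    integral_exp_mul_complex_Ioi (by simpa using hc)]
  simp only [ofReal_zero, mul_zero, Complex.exp_zero]
  field_simp
  ring_nf
  rw [I_sq]
  ring

end TwoSidedExponential

section Cauchy

variable {γ : ℝ≥0}

lemma cauchyPDFReal_zero_apply (γ : ℝ≥0) (x : ℝ) :
    cauchyPDFReal 0 γ x = γ / (π * (γ ^ 2 + x ^ 2)) := by
  rw [cauchyPDFReal_def, sub_zero, add_comm]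
  field_simp

lemma cauchyPDFReal_nonneg (x₀ : ℝ) (γ : ℝ≥0) (x : ℝ) : 0 ≤ cauchyPDFReal x₀ γ x := by
  rw [cauchyPDFReal_def]
  positivity

lemma fourier_exp_neg_mul_abs (hγ : γ ≠ 0) (w : ℝ) :
    𝓕 (fun x : ℝ => (rexp (-(γ * |x|)) : ℂ)) w =
      2 * π * cauchyPDFReal 0 γ (-(2 * π * w)) := by
  have hγ' : (0 : ℝ) < γ := NNReal.coe_pos.2 (pos_iff_ne_zero.2 hγ)
  rw [Real.fourier_real_eq_integral_exp_smul]
  simp_rw [smul_eq_mul, show ∀ v : ℝ, ((-2 * π * v * w : ℝ) : ℂ) = ((-(2 * π * w) : ℝ) : ℂ) * v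
    from fun v => by push_cast; ring]
  rw [integral_exp_mul_I_mul_exp_neg_mul_abs _ hγ', cauchyPDFReal_zero_apply]
  push_cast
  field_simp

theorem integral_cauchyPDFReal_mul_exp_mul_I (hγ : γ ≠ 0) (a : ℝ) :
    ∫ x, cauchyPDFReal 0 γ x * cexp (a * x * I) = rexp (-(γ * |a|)) := by
  set g : ℝ → ℂ := fun x => (rexp (-(γ * |x|)) : ℂ)
  have hg : Integrable g := by
    simpa [g] using
      integrable_exp_mul_I_mul_exp_neg_mul_abs 0 (NNReal.coe_pos.2 (pos_iff_ne_zero.2 hγ))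
  have hfourier : 𝓕 g = fun w => ((2 * π * cauchyPDFReal 0 γ (-(2 * π) * w) : ℝ) : ℂ) := by
    ext w
    rw [fourier_exp_neg_mul_abs hγ, neg_mul]
    push_cast
    rfl
  have hg_cont : Continuous g := by fun_prop
  have hfourier_int : Integrable (𝓕 g) := by
    rw [hfourier]
    exact (((integrable_cauchyPDFReal 0).comp_mul_left'
      (neg_ne_zero.2 Real.two_pi_pos.ne')).const_mul _).ofReal
  -- Fourier inversion at `-a`, followed by the substitution `y = -2πv`.
  have hinv := hg.fourierInv_fourier_eq hfourier_int (hg_cont.continuousAt (x := -a))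
  rw [Real.fourierInv_eq_fourier_neg, Real.fourier_real_eq_integral_exp_smul, hfourier] at hinv
  have hscale := Measure.integral_comp_mul_left
    (fun y : ℝ => cauchyPDFReal 0 γ y * cexp (a * y * I)) (-(2 * π))
  rw [abs_inv, abs_neg, abs_of_pos Real.two_pi_pos] at hscale
  calc ∫ x, cauchyPDFReal 0 γ x * cexp (a * x * I)
      = (2 * π) • ((2 * π)⁻¹ • ∫ x, cauchyPDFReal 0 γ x * cexp (a * x * I)) := by
        rw [smul_smul, mul_inv_cancel₀ Real.two_pi_pos.ne', one_smul]
    _ = g (-a) := by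
        rw [← hscale, ← integral_smul, ← hinv]
        congr 1
        ext v
        simp only [Complex.real_smul, smul_eq_mul]
        push_cast
        ring_nf
    _ = rexp (-(γ * |a|)) := by simp [g]

end Cauchy

lemma integrable_prod_of_norm_eq_mul {X M E : Type*} [MeasurableSpace X] [MeasurableSpace M]
    [NormedAddCommGroup E] {ν : Measure X} {μ : Measure M} [SFinite ν] [SFinite μ]
    {F : X × M → E} {ρ : M → X → ℝ} {h : M → ℝ} (hF : AEStronglyMeasurable F (ν.prod μ))
    (hρ : ∀ k, Integrable (ρ k) ν) (hρ_one : ∀ k, ∫ x, ρ k x ∂ν = 1) (hh : Integrable h μ)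
    (hnorm : ∀ x k, ‖F (x, k)‖ = ρ k x * h k) : Integrable F (ν.prod μ) := by
  rw [← integrable_norm_iff hF]
  refine (integrable_prod_iff' hF.norm).2 ⟨ae_of_all _ fun k => ?_, ?_⟩
  · simpa only [hnorm] using (hρ k).mul_const (h k)
  · simp_rw [norm_norm]
    simpa only [hnorm, integral_mul_const, hρ_one, one_mul] using hh

section NelsonEmbedding

variable {M : Type*} {ω : M → ℝ}

lemma nelsonJ_apply (t : ℝ) (f : M → ℂ) (x : ℝ) {k : M} (hk : 0 ≤ ω k) :
    nelsonJ ω t f (x, k) =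
      √(cauchyPDFReal 0 (ω k).toNNReal x) * cexp (-(t * x) * I) * f k := by
  rw [nelsonJ, cauchyPDFReal_zero_apply, Real.coe_toNNReal _ hk]
  congr 3
  ring

lemma norm_nelsonJ_sq (t : ℝ) (f : M → ℂ) (x : ℝ) {k : M} (hk : 0 ≤ ω k) :
    ‖nelsonJ ω t f (x, k)‖ ^ 2 = cauchyPDFReal 0 (ω k).toNNReal x * ‖f k‖ ^ 2 := by
  rw [nelsonJ_apply t f x hk, ← ofReal_mul, ← ofReal_neg, norm_mul, norm_mul,
    norm_exp_ofReal_mul_I, Complex.norm_real, Real.norm_of_nonneg (Real.sqrt_nonneg _), mul_one,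
    mul_pow, Real.sq_sqrt (cauchyPDFReal_nonneg _ _ _)]

lemma conj_nelsonJ_mul_nelsonJ (s t : ℝ) (f g : M → ℂ) (x : ℝ) {k : M} (hk : 0 ≤ ω k) :
    (starRingEnd ℂ) (nelsonJ ω s f (x, k)) * nelsonJ ω t g (x, k) =
      cauchyPDFReal 0 (ω k).toNNReal x * cexp ((s - t : ℝ) * x * I) *
        ((starRingEnd ℂ) (f k) * g k) := by
  set ρ := cauchyPDFReal 0 (ω k).toNNReal x
  have hρ : (√ρ : ℂ) * √ρ = ρ := by
    rw [← ofReal_mul, Real.mul_self_sqrt (cauchyPDFReal_nonneg _ _ _)]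
  rw [nelsonJ_apply s f x hk, nelsonJ_apply t g x hk]
  simp only [map_mul, conj_ofReal, ← exp_conj, map_neg, conj_I]
  calc _ = (√ρ : ℂ) * √ρ * (cexp (-(s * x) * -I) * cexp (-(t * x) * I)) *
        ((starRingEnd ℂ) (f k) * g k) := by ring
    _ = _ := by
      rw [hρ, ← Complex.exp_add]
      push_cast
      ring_nf

lemma norm_conj_nelsonJ_mul_nelsonJ (s t : ℝ) (f g : M → ℂ) (x : ℝ) {k : M} (hk : 0 ≤ ω k) :
    ‖(starRingEnd ℂ) (nelsonJ ω s f (x, k)) * nelsonJ ω t g (x, k)‖ =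
      cauchyPDFReal 0 (ω k).toNNReal x * (‖f k‖ * ‖g k‖) := by
  rw [conj_nelsonJ_mul_nelsonJ s t f g x hk, ← ofReal_mul, norm_mul, norm_mul,
    norm_exp_ofReal_mul_I, Complex.norm_real, Real.norm_of_nonneg (cauchyPDFReal_nonneg _ _ _),
    mul_one, norm_mul, RCLike.norm_conj]

lemma aestronglyMeasurable_nelsonJ [MeasurableSpace M] {ν : Measure ℝ} {μ : Measure M}
    (hω : Measurable ω) (t : ℝ) {f : M → ℂ} (hf : AEStronglyMeasurable f μ) :
    AEStronglyMeasurable (nelsonJ ω t f) (ν.prod μ) := by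
  unfold nelsonJ
  exact AEStronglyMeasurable.mul (by fun_prop) hf.comp_snd

end NelsonEmbedding

/-- For all `s, t ∈ ℝ`, `j_t` maps `L²(μ)` isometrically into `L²(λ⊗μ)`,
and `⟨j_s f, j_t g⟩ = ∫_M e^{-|s-t| ω(k)} conj (f k) * g k dμ(k)`. -/
theorem statement1 {M : Type*} [MeasurableSpace M] (μ : Measure M) [SigmaFinite μ]
    (ω : M → ℝ) (hω : Measurable ω) (hωpos : ∀ k, 0 < ω k)
    (s t : ℝ) (f g : M → ℂ) (hf : MemLp f 2 μ) (hg : MemLp g 2 μ) :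
    MemLp (nelsonJ ω t f) 2 ((volume : Measure ℝ).prod μ) ∧
    (∫ p, ‖nelsonJ ω t f p‖ ^ 2 ∂((volume : Measure ℝ).prod μ)) =
      (∫ k, ‖f k‖ ^ 2 ∂μ) ∧
    (∫ p, (starRingEnd ℂ) (nelsonJ ω s f p) * nelsonJ ω t g p
        ∂((volume : Measure ℝ).prod μ)) =
      ∫ k, ((Real.exp (-|s - t| * ω k) : ℝ) : ℂ) * (starRingEnd ℂ) (f k) * g k ∂μ := by
  have hω_nonneg k : 0 ≤ ω k := (hωpos k).le
  have hγ k : (ω k).toNNReal ≠ 0 := (Real.toNNReal_pos.2 (hωpos k)).ne'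
  have hρ_one k : ∫ x, cauchyPDFReal 0 (ω k).toNNReal x = 1 :=
    integral_cauchyPDFReal_eq_one 0 (hγ k)
  have hj_meas := aestronglyMeasurable_nelsonJ (ν := volume) hω t hf.1
  have hsq : Integrable (fun p => ‖nelsonJ ω t f p‖ ^ 2) ((volume : Measure ℝ).prod μ) :=
    integrable_prod_of_norm_eq_mul (hj_meas.norm.pow 2) (fun _ => integrable_cauchyPDFReal 0)
      hρ_one ((memLp_two_iff_integrable_sq_norm hf.1).1 hf) fun x k => by
        rw [Real.norm_of_nonneg (by positivity), norm_nelsonJ_sq t f x (hω_nonneg k)]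
  have hinner : Integrable (fun p => (starRingEnd ℂ) (nelsonJ ω s f p) * nelsonJ ω t g p)
      ((volume : Measure ℝ).prod μ) :=
    integrable_prod_of_norm_eq_mul
      ((aestronglyMeasurable_nelsonJ hω s hf.1).star.mul (aestronglyMeasurable_nelsonJ hω t hg.1))
      (fun _ => integrable_cauchyPDFReal 0) hρ_one (hf.norm.integrable_mul hg.norm)
      fun x k => norm_conj_nelsonJ_mul_nelsonJ s t f g x (hω_nonneg k)
  refine ⟨(memLp_two_iff_integrable_sq_norm hj_meas).2 hsq, ?_, ?_⟩
  · rw [integral_prod_symm _ hsq]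
    refine integral_congr_ae (ae_of_all _ fun k => ?_)
    simp only [norm_nelsonJ_sq t f _ (hω_nonneg k), integral_mul_const, hρ_one, one_mul]
  · rw [integral_prod_symm _ hinner]
    refine integral_congr_ae (ae_of_all _ fun k => ?_)
    simp_rw [conj_nelsonJ_mul_nelsonJ s t f g _ (hω_nonneg k)]
    rw [integral_mul_const, integral_cauchyPDFReal_mul_exp_mul_I (hγ k),
      Real.coe_toNNReal _ (hω_nonneg k), mul_assoc, neg_mul, mul_comm (ω k)]
end

section
/- For every f ∈ L²(μ), the map ℝ ∋ t ↦ j_t f ∈ L²(λ⊗μ) is continuous (i.e., the family of isometries (j_t)_{t∈ℝ} is strongly continuous). -/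
open MeasureTheory

/-!
Since `|e^{-itk₀}| = 1`, the modulus of `j_t f` does not depend on `t`, and for fixed `k` the
square of the real prefactor is the Cauchy density of scale `ω(k)` in `k₀`, so `j_t f` is square
integrable, with `∫ |j_t f (k₀, k)|² dk₀ = |f k|²`. Strong continuity is then dominated
convergence in `L²`: for each `(k₀, k)` the value `(j_t f)(k₀, k)` is continuous in `t`, and
`|j_0 f|` dominates all `|j_t f|`.
-/

open Filter Topology ENNReal ProbabilityTheory Real

section

variable {α E : Type*} [MeasurableSpace α] {μ : Measure α} [NormedAddCommGroup E] {p : ℝ≥0∞}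

theorem tendsto_eLpNorm_sub_of_dominated {ι : Type*} {l : Filter ι} [l.IsCountablyGenerated]
    (hp : p ≠ ∞) {F : ι → α → E} {f : α → E} {G : α → ℝ} (hG : MemLp G p μ)
    (hF_meas : ∀ᶠ i in l, AEStronglyMeasurable (F i) μ) (hf_meas : AEStronglyMeasurable f μ)
    (h_bound : ∀ᶠ i in l, ∀ᵐ a ∂μ, ‖F i a‖ ≤ G a) (hf_bound : ∀ᵐ a ∂μ, ‖f a‖ ≤ G a)
    (h_lim : ∀ᵐ a ∂μ, Tendsto (F · a) l (𝓝 (f a))) :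
    Tendsto (fun i => eLpNorm (F i - f) p μ) l (𝓝 0) := by
  rcases eq_or_ne p 0 with rfl | hp0
  · simpa using tendsto_const_nhds
  have hp_pos : 0 < p.toReal := toReal_pos hp0 hp
  have h_int : Tendsto (fun i => ∫⁻ a, ‖F i a - f a‖ₑ ^ p.toReal ∂μ) l (𝓝 0) := by
    have h_fin : ∫⁻ a, ‖2 * G a‖ₑ ^ p.toReal ∂μ ≠ ∞ :=
      (lintegral_rpow_enorm_lt_top_of_eLpNorm_lt_top hp0 hp (hG.const_mul 2).eLpNorm_lt_top).ne
    have h_dom : ∀ᶠ i in l, ∀ᵐ a ∂μ, ‖F i a - f a‖ₑ ^ p.toReal ≤ ‖2 * G a‖ₑ ^ p.toReal := by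
      filter_upwards [h_bound] with i hi
      filter_upwards [hi, hf_bound] with a hFa hfa
      gcongr
      rw [enorm_le_iff_norm_le, Real.norm_eq_abs]
      linarith [norm_sub_le (F i a) (f a), le_abs_self (2 * G a)]
    simpa [zero_rpow_of_pos hp_pos] using tendsto_lintegral_filter_of_dominated_convergence' _
      (hF_meas.mono fun i hi => (hi.sub hf_meas).enorm.pow_const _) h_dom h_fin
      (h_lim.mono fun a ha => (tendsto_sub_nhds_zero_iff.2 ha).enorm.ennrpow_const _)
  simp only [eLpNorm_eq_lintegral_rpow_enorm_toReal hp0 hp]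
  simpa [Function.comp_def, zero_rpow_of_pos (inv_pos.2 hp_pos)] using
    ((continuous_rpow_const (y := p.toReal⁻¹)).tendsto 0).comp h_int

theorem continuous_toLp_of_dominated {T : Type*} [TopologicalSpace T] [FirstCountableTopology T]
    [Fact (1 ≤ p)] (hp : p ≠ ∞) {F : T → α → E} (hF : ∀ t, MemLp (F t) p μ) {G : α → ℝ}
    (hG : MemLp G p μ) (h_bound : ∀ t, ∀ᵐ a ∂μ, ‖F t a‖ ≤ G a)
    (h_cont : ∀ᵐ a ∂μ, Continuous (F · a)) :
    Continuous fun t => (hF t).toLp (F t) :=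
  continuous_iff_continuousAt.2 fun t =>
    (Lp.tendsto_Lp_iff_tendsto_eLpNorm'' F hF (F t) (hF t)).2 <|
      tendsto_eLpNorm_sub_of_dominated hp hG (.of_forall fun s => (hF s).1) (hF t).1
        (.of_forall h_bound) (h_bound t) (h_cont.mono fun _ ha => ha.tendsto t)

end

theorem memLp_two_prod_mul_snd {X M 𝕜 : Type*} [RCLike 𝕜] [MeasurableSpace X] [MeasurableSpace M]
    {ν : Measure X} {μ : Measure M} [SFinite ν] [SFinite μ] {K : X × M → 𝕜}
    (hK : AEStronglyMeasurable K (ν.prod μ)) (hK_int : ∀ k, Integrable (fun x => ‖K (x, k)‖ ^ 2) ν)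
    (hK_norm : ∀ k, ∫ x, ‖K (x, k)‖ ^ 2 ∂ν = 1) {f : M → 𝕜} (hf : MemLp f 2 μ) :
    MemLp (fun p => K p * f p.2) 2 (ν.prod μ) := by
  have hmeas : AEStronglyMeasurable (fun p => K p * f p.2) (ν.prod μ) := hK.mul hf.1.comp_snd
  have hmeas_sq : AEStronglyMeasurable (fun p => ‖K p * f p.2‖ ^ 2) (ν.prod μ) := hmeas.norm.pow 2
  rw [memLp_two_iff_integrable_sq_norm hmeas, integrable_prod_iff' hmeas_sq]
  simp only [norm_pow, norm_norm, norm_mul, mul_pow]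
  refine ⟨.of_forall fun k => (hK_int k).mul_const _, ?_⟩
  simp only [integral_mul_const, hK_norm, one_mul]
  exact hf.integrable_norm_pow two_ne_zero

lemma div_pi_mul_sq_add_sq_eq_cauchyPDFReal {a : ℝ} (ha : 0 ≤ a) (x : ℝ) :
    a / (π * (a ^ 2 + x ^ 2)) = cauchyPDFReal 0 a.toNNReal x := by
  simp only [cauchyPDFReal_def, coe_toNNReal', ha, sup_of_le_left, sub_zero]
  field_simp
  ring

section

variable {M : Type*}

noncomputable def nelsonKernel (ω : M → ℝ) (t : ℝ) (p : ℝ × M) : ℂ :=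
  (√(ω p.2 / (π * (ω p.2 ^ 2 + p.1 ^ 2))) : ℂ) * Complex.exp (-(Complex.I * t * p.1))

lemma nelsonJ_eq_nelsonKernel_mul (ω : M → ℝ) (t : ℝ) (f : M → ℂ) :
    nelsonJ ω t f = fun p => nelsonKernel ω t p * f p.2 := rfl

lemma norm_nelsonKernel (ω : M → ℝ) (t : ℝ) (p : ℝ × M) :
    ‖nelsonKernel ω t p‖ = √(ω p.2 / (π * (ω p.2 ^ 2 + p.1 ^ 2))) := by
  simp [nelsonKernel, Complex.norm_exp]

lemma norm_nelsonJ_eq (ω : M → ℝ) (t : ℝ) (f : M → ℂ) (p : ℝ × M) :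
    ‖nelsonJ ω t f p‖ = ‖nelsonJ ω 0 f p‖ := by
  simp only [nelsonJ_eq_nelsonKernel_mul, norm_mul, norm_nelsonKernel]

lemma norm_nelsonKernel_sq {ω : M → ℝ} (hω : ∀ k, 0 ≤ ω k) (t x : ℝ) (k : M) :
    ‖nelsonKernel ω t (x, k)‖ ^ 2 = cauchyPDFReal 0 (ω k).toNNReal x := by
  rw [norm_nelsonKernel, sq_sqrt (by positivity [hω k]),
    div_pi_mul_sq_add_sq_eq_cauchyPDFReal (hω k)]

variable [MeasurableSpace M] {ω : M → ℝ}

lemma measurable_nelsonKernel (hω : Measurable ω) (t : ℝ) : Measurable (nelsonKernel ω t) := by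
  unfold nelsonKernel
  fun_prop

lemma memLp_nelsonJ (μ : Measure M) [SFinite μ] (hω : Measurable ω) (hωpos : ∀ k, 0 < ω k)
    (t : ℝ) {f : M → ℂ} (hf : MemLp f 2 μ) :
    MemLp (nelsonJ ω t f) 2 ((volume : Measure ℝ).prod μ) := by
  have hK_sq := norm_nelsonKernel_sq (fun k => (hωpos k).le) t
  refine memLp_two_prod_mul_snd (measurable_nelsonKernel hω t).aestronglyMeasurable
    (fun k => ?_) (fun k => ?_) hf
  · simpa only [hK_sq] using integrable_cauchyPDFReal 0
  · simpa only [hK_sq] using integral_cauchyPDFReal_eq_one 0 (by simpa using hωpos k)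

end

/-- For every `f ∈ L²(μ)`, the map `ℝ ∋ t ↦ j_t f ∈ L²(λ⊗μ)` is continuous,
i.e. the family of isometries `(j_t)` is strongly continuous. -/
theorem statement2 {M : Type*} [MeasurableSpace M] (μ : Measure M) [SigmaFinite μ]
    (ω : M → ℝ) (hω : Measurable ω) (hωpos : ∀ k, 0 < ω k)
    (f : M → ℂ) (hf : MemLp f 2 μ) :
    ∃ hmem : ∀ t : ℝ, MemLp (nelsonJ ω t f) 2 ((volume : Measure ℝ).prod μ),
      Continuous fun t : ℝ => (hmem t).toLp (nelsonJ ω t f) := by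
  have hmem : ∀ t : ℝ, MemLp (nelsonJ ω t f) 2 ((volume : Measure ℝ).prod μ) :=
    fun t => memLp_nelsonJ μ hω hωpos t hf
  refine ⟨hmem, continuous_toLp_of_dominated ofNat_ne_top hmem (hmem 0).norm
    (fun t => .of_forall fun p => (norm_nelsonJ_eq ω t f p).le) (.of_forall fun p => ?_)⟩
  unfold nelsonJ
  fun_prop
end

section
/- The function b is continuous on [0,T), for every t ∈ [0,T) the function s ↦ (y − b_s)/(T−s) is Lebesgue integrable on [0,t], and b satisfies the Brownian-bridge integral equation b_t = q + B_t + ∫₀ᵗ (y − b_s)/(T−s) ds for all t ∈ [0,T). -/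
open MeasureTheory

/-- The (pathwise) Brownian-bridge path from `q` to `y` in time `T`, driven by `B`:
`b_t = (t/T)y + ((T−t)/T)q + B_t − (T−t)∫₀ᵗ (T−s)⁻² B_s ds`. -/
noncomputable def bridgePath (ν : ℕ) (T : ℝ) (q y : Fin ν → ℝ)
    (B : ℝ → Fin ν → ℝ) (t : ℝ) : Fin ν → ℝ :=
  (t / T) • y + ((T - t) / T) • q + B t -
    (T - t) • ∫ s in (0 : ℝ)..t, ((T - s) ^ 2)⁻¹ • B s

/-! Write `b_t = q + B_t + G_t` with `G_t = (t/T)(y - q) - (T - t)∫₀ᵗ (T - s)⁻² B_s ds`.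
Then `G_0 = 0`, and differentiating `G` on `(0, T)` gives exactly the drift `(y - b_t)/(T - t)`,
so the integral equation is the fundamental theorem of calculus for `G` on `[0, t]`. -/

open Set intervalIntegral

section Primitive

variable {E : Type*} [NormedAddCommGroup E] [NormedSpace ℝ E]
  {f : ℝ → E} {a b : ℝ}

theorem ContinuousOn.continuousOn_primitive_Ico (hf : ContinuousOn f (Ico a b)) :
    ContinuousOn (fun u => ∫ s in a..u, f s) (Ico a b) := by
  intro t ht
  obtain ⟨t', htt', ht'b⟩ := exists_between ht.2
  have hcont : ContinuousOn (fun u => ∫ s in a..u, f s) (Icc a t') := by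
    rw [← uIcc_of_le (ht.1.trans htt'.le)]
    exact continuousOn_primitive_interval'
      ((hf.mono (Icc_subset_Ico_right ht'b)).intervalIntegrable_of_Icc (ht.1.trans htt'.le))
      left_mem_uIcc
  exact (hcont t ⟨ht.1, htt'.le⟩).mono_of_mem_nhdsWithin
    (mem_nhdsWithin.2 ⟨Iio t', isOpen_Iio, htt', fun s hs => ⟨hs.2.1, hs.1.le⟩⟩)

theorem ContinuousOn.hasDerivAt_primitive [CompleteSpace E] (hf : ContinuousOn f (Ico a b))
    {t : ℝ} (ht : t ∈ Ioo a b) : HasDerivAt (fun u => ∫ s in a..u, f s) (f t) t :=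
  integral_hasDerivAt_right
    ((hf.mono (Icc_subset_Ico_right ht.2)).intervalIntegrable_of_Icc ht.1.le)
    ((hf.mono Ioo_subset_Ico_self).stronglyMeasurableAtFilter isOpen_Ioo t ht)
    (hf.continuousAt (Filter.mem_of_superset (isOpen_Ioo.mem_nhds ht) Ioo_subset_Ico_self))

end Primitive

noncomputable def bridgeDriftPart (ν : ℕ) (T : ℝ) (q y : Fin ν → ℝ)
    (B : ℝ → Fin ν → ℝ) (t : ℝ) : Fin ν → ℝ :=
  (t / T) • (y - q) - (T - t) • ∫ s in (0 : ℝ)..t, ((T - s) ^ 2)⁻¹ • B s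

section Bridge

variable {ν : ℕ} {T : ℝ} {q y : Fin ν → ℝ} {B : ℝ → Fin ν → ℝ}

theorem bridgePath_eq_add_bridgeDriftPart (hT : T ≠ 0) :
    bridgePath ν T q y B = fun t => q + B t + bridgeDriftPart ν T q y B t := by
  funext t
  unfold bridgePath bridgeDriftPart
  match_scalars <;> (field_simp; try ring)

theorem continuousOn_bridgeKernel (hB : ContinuousOn B (Icc 0 T)) :
    ContinuousOn (fun s => ((T - s) ^ 2)⁻¹ • B s) (Ico 0 T) := by
  refine ContinuousOn.smul (((continuousOn_const.sub continuousOn_id).pow 2).inv₀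
    fun s hs => ?_) (hB.mono Ico_subset_Icc_self)
  exact pow_ne_zero 2 (sub_ne_zero.2 hs.2.ne')

theorem continuousOn_bridgeDriftPart (hB : ContinuousOn B (Icc 0 T)) :
    ContinuousOn (bridgeDriftPart ν T q y B) (Ico 0 T) :=
  (by fun_prop : Continuous fun t : ℝ => (t / T) • (y - q)).continuousOn.sub
    ((continuousOn_const.sub continuousOn_id).smul
      (continuousOn_bridgeKernel hB).continuousOn_primitive_Ico)

theorem continuousOn_bridgePath (hT : T ≠ 0) (hB : ContinuousOn B (Icc 0 T)) :
    ContinuousOn (bridgePath ν T q y B) (Ico 0 T) := by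
  rw [bridgePath_eq_add_bridgeDriftPart hT]
  exact (continuousOn_const.add (hB.mono Ico_subset_Icc_self)).add
    (continuousOn_bridgeDriftPart hB)

theorem continuousOn_bridgeDrift (hT : T ≠ 0) (hB : ContinuousOn B (Icc 0 T)) :
    ContinuousOn (fun s => (T - s)⁻¹ • (y - bridgePath ν T q y B s)) (Ico 0 T) :=
  ((continuousOn_const.sub continuousOn_id).inv₀ fun _ hs => sub_ne_zero.2 hs.2.ne').smul
    (continuousOn_const.sub (continuousOn_bridgePath hT hB))

theorem hasDerivAt_bridgeDriftPart (hT : T ≠ 0) (hB : ContinuousOn B (Icc 0 T)) {t : ℝ}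
    (ht : t ∈ Ioo 0 T) :
    HasDerivAt (bridgeDriftPart ν T q y B) ((T - t)⁻¹ • (y - bridgePath ν T q y B t)) t := by
  have hlin : HasDerivAt (fun u : ℝ => (u / T) • (y - q)) (T⁻¹ • (y - q)) t := by
    simpa [one_div] using ((hasDerivAt_id t).div_const T).smul_const (y - q)
  have hdecay : HasDerivAt (fun u : ℝ => T - u) (-1) t := by
    simpa using (hasDerivAt_id t).const_sub T
  refine (hlin.sub (hdecay.smul
    ((continuousOn_bridgeKernel hB).hasDerivAt_primitive ht))).congr_deriv ?_
  have hTt : T - t ≠ 0 := sub_ne_zero.2 ht.2.ne'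
  rw [bridgePath_eq_add_bridgeDriftPart hT]
  unfold bridgeDriftPart
  match_scalars <;> (field_simp; try ring)

end Bridge

/-- `b` is continuous on `[0,T)`, the drift `s ↦ (y − b_s)/(T−s)` is
integrable on `[0,t]` for every `t ∈ [0,T)`, and `b` satisfies the Brownian-bridge
integral equation `b_t = q + B_t + ∫₀ᵗ (y − b_s)/(T−s) ds` on `[0,T)`. -/
theorem statement3 (ν : ℕ) (T : ℝ) (hT : 0 < T) (q y : Fin ν → ℝ)
    (B : ℝ → Fin ν → ℝ) (hB : ContinuousOn B (Set.Icc 0 T)) :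
    ContinuousOn (bridgePath ν T q y B) (Set.Ico 0 T) ∧
    (∀ t ∈ Set.Ico (0 : ℝ) T,
      IntervalIntegrable (fun s => (T - s)⁻¹ • (y - bridgePath ν T q y B s)) volume 0 t) ∧
    (∀ t ∈ Set.Ico (0 : ℝ) T,
      bridgePath ν T q y B t =
        q + B t + ∫ s in (0 : ℝ)..t, (T - s)⁻¹ • (y - bridgePath ν T q y B s)) := by
  have hT0 : T ≠ 0 := hT.ne'
  have hint : ∀ t ∈ Ico (0 : ℝ) T,
      IntervalIntegrable (fun s => (T - s)⁻¹ • (y - bridgePath ν T q y B s)) volume 0 t :=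
    fun t ht => ((continuousOn_bridgeDrift hT0 hB).mono
      (Icc_subset_Ico_right ht.2)).intervalIntegrable_of_Icc ht.1
  refine ⟨continuousOn_bridgePath hT0 hB, hint, fun t ht => ?_⟩
  rw [integral_eq_sub_of_hasDerivAt_of_le ht.1
    ((continuousOn_bridgeDriftPart hB).mono (Icc_subset_Ico_right ht.2))
    (fun _ hs => hasDerivAt_bridgeDriftPart hT0 hB ⟨hs.1, hs.2.trans ht.2⟩) (hint t ht)]
  simp [bridgeDriftPart, bridgePath_eq_add_bridgeDriftPart hT0]
end

section
/- For every κ > 0 there exists a constant C = C(ν, κ, T) > 0, depending only on ν, κ, and T, such that ∫₀^T (T−s)^κ E[|Y_s|^{2κ}] ds ≤ C · E[(1 + |q − y|)^{2κ}]. -/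
open MeasureTheory ProbabilityTheory

/-- A `ν`-dimensional Brownian motion `B` on a filtered probability space
`(Ω, m, (ℱ_t), P)` satisfying the usual conditions: the filtration is complete and
right-continuous, `B` has continuous paths on `[0,∞)` with `B_0 = 0`, `B` is adapted, and
for `0 ≤ s ≤ t` the increment `B_t − B_s` is independent of `ℱ_s` and is a centered
Gaussian vector with covariance matrix `(t−s)·Id` (componentwise iid `N(0, t−s)`). -/
structure IsBrownianMotion {Ω : Type*} [m : MeasurableSpace Ω] (P : Measure Ω) (ν : ℕ)
    (F : Filtration ℝ m) (B : ℝ → Ω → Fin ν → ℝ) : Prop where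
  complete : ∀ (t : ℝ) (A : Set Ω), P A = 0 → MeasurableSet[F t] A
  rightCont : ∀ t : ℝ, (F t : MeasurableSpace Ω) = ⨅ s ∈ Set.Ioi t, (F s : MeasurableSpace Ω)
  contPaths : ∀ ω : Ω, ContinuousOn (fun t => B t ω) (Set.Ici 0)
  start : ∀ ω : Ω, B 0 ω = 0
  adapted : ∀ t : ℝ, Measurable[F t] (B t)
  indepIncr : ∀ s t : ℝ, 0 ≤ s → s ≤ t →
    Indep (MeasurableSpace.comap (fun ω => B t ω - B s ω) inferInstance) (F s) P
  gaussIncr : ∀ s t : ℝ, 0 ≤ s → s ≤ t →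
    Measure.map (fun ω => B t ω - B s ω) P =
      Measure.pi fun _ : Fin ν => gaussianReal 0 (Real.toNNReal (t - s))

/-- The Brownian bridge from `q` to `y` in time `T` driven by the path `B`:
`b_t = (t/T)y + ((T−t)/T)q + B_t − (T−t)∫₀ᵗ (T−s)⁻² B_s ds` for `t < T`, and `b_t = y`
otherwise (in particular `b_T = y`). -/
noncomputable def bridgeBB (ν : ℕ) (T : ℝ) (q y : Fin ν → ℝ) (B : ℝ → Fin ν → ℝ)
    (t : ℝ) : Fin ν → ℝ :=
  if t < T then
    (t / T) • y + ((T - t) / T) • q + B t -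
      (T - t) • ∫ s in (0 : ℝ)..t, ((T - s) ^ 2)⁻¹ • B s
  else y

open scoped ENNReal NNReal
open WithLp (toLp)

/-!
Substituting the bridge formula and `∫₀ˢ (T - u)⁻² du = (T - s)⁻¹ - T⁻¹` gives
`Y_s = (y - q)/T - B_s/T - ∫₀ˢ (T - u)⁻² (B_s - B_u) du`.
The first two terms have `2κ`-th moments `T^{-2κ} E|q - y|^{2κ}` and `T^{-2κ} s^κ E|Z|^{2κ}`,
`Z` standard Gaussian. For the third, write `(T - u)⁻² = (T - u)^{-3/2} · (T - u)^{-1/2}`: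
Hölder's inequality for the weight `(T - u)^{-3/2}`, whose mass on `[0, s]` is at most
`2 (T - s)^{-1/2}`, together with `E|B_s - B_u|^p = (s - u)^{p/2} E|Z|^p ≤ (T - u)^{p/2} E|Z|^p`,
bounds its `p`-th moment by `2^p (T - s)^{-p/2} E|Z|^p` for `p ≥ 1`; Jensen's inequality brings
the exponent down to `2κ`. So `(T - s)^κ E|Y_s|^{2κ} ≤ C · E(1 + |q - y|)^{2κ}` uniformly in
`s < T`, and integrating over `s ∈ [0, T]` costs a factor `T`.
-/

theorem ENNReal.rpow_sum_le_card_rpow_mul_sum_rpow {ι : Type*} {s : Finset ι} (hs : s.Nonempty)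
    (f : ι → ℝ≥0∞) {p : ℝ} (hp : 0 ≤ p) :
    (∑ i ∈ s, f i) ^ p ≤ (s.card : ℝ≥0∞) ^ p * ∑ i ∈ s, f i ^ p := by
  obtain ⟨i₀, hi₀, hsup⟩ := s.exists_mem_eq_sup hs f
  have hsum : ∑ i ∈ s, f i ≤ s.card * f i₀ := by
    simpa [hsup] using s.sum_le_card_nsmul f _ fun i hi => s.le_sup (f := f) hi
  calc (∑ i ∈ s, f i) ^ p ≤ (s.card * f i₀) ^ p := ENNReal.rpow_le_rpow hsum hp
    _ = (s.card : ℝ≥0∞) ^ p * f i₀ ^ p := ENNReal.mul_rpow_of_nonneg _ _ hp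
    _ ≤ (s.card : ℝ≥0∞) ^ p * ∑ i ∈ s, f i ^ p := by
      gcongr
      exact Finset.single_le_sum (fun i _ => zero_le (a := f i ^ p)) hi₀

theorem ENNReal.rpow_add_add_le (a b c : ℝ≥0∞) {p : ℝ} (hp : 0 ≤ p) :
    (a + b + c) ^ p ≤ 3 ^ p * (a ^ p + b ^ p + c ^ p) := by
  simpa [Fin.sum_univ_three] using
    ENNReal.rpow_sum_le_card_rpow_mul_sum_rpow Finset.univ_nonempty ![a, b, c] hp

theorem lintegral_rpow_le_lintegral_rpow_rpow {Ω : Type*} [MeasurableSpace Ω] {P : Measure Ω}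
    [IsProbabilityMeasure P] {f : Ω → ℝ≥0∞} (hf : AEMeasurable f P) {p q : ℝ} (hp : 0 < p)
    (hpq : p ≤ q) :
    ∫⁻ ω, f ω ^ p ∂P ≤ (∫⁻ ω, f ω ^ q ∂P) ^ (p / q) := by
  have h := eLpNorm'_le_eLpNorm'_of_exponent_le hp hpq P hf.aestronglyMeasurable
  simp only [eLpNorm'_eq_lintegral_enorm, enorm_eq_self] at h
  have := ENNReal.rpow_le_rpow h hp.le
  rwa [← ENNReal.rpow_mul, ← ENNReal.rpow_mul, one_div_mul_cancel hp.ne', ENNReal.rpow_one,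
    one_div_mul_eq_div] at this

theorem lintegral_mul_rpow_le {α : Type*} [MeasurableSpace α] {μ : Measure α}
    {w g : α → ℝ≥0∞} (hw : AEMeasurable w μ) (hg : AEMeasurable g μ) {p : ℝ} (hp : 1 ≤ p) :
    (∫⁻ u, w u * g u ∂μ) ^ p ≤ (∫⁻ u, w u ∂μ) ^ (p - 1) * ∫⁻ u, w u * g u ^ p ∂μ := by
  rcases hp.eq_or_lt with rfl | hp
  · simp
  set q := p / (p - 1)
  have hpq : p.HolderConjugate q := .conjExponent hp
  have hsplit : ∀ u, w u * g u = (w u ^ p⁻¹ * g u) * w u ^ q⁻¹ := fun u => by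
    rw [mul_right_comm, ← ENNReal.rpow_add_of_nonneg _ _ (by positivity) hpq.symm.inv_nonneg,
      hpq.inv_add_inv_eq_one, ENNReal.rpow_one]
  have hF : ∀ u, (w u ^ p⁻¹ * g u) ^ p = w u * g u ^ p := fun u => by
    rw [ENNReal.mul_rpow_of_nonneg _ _ hpq.nonneg, ← ENNReal.rpow_mul,
      inv_mul_cancel₀ hpq.ne_zero, ENNReal.rpow_one]
  have hG : ∀ u, (w u ^ q⁻¹) ^ q = w u := fun u => by
    rw [← ENNReal.rpow_mul, inv_mul_cancel₀ hpq.symm.ne_zero, ENNReal.rpow_one]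
  have hHolder := ENNReal.lintegral_mul_le_Lp_mul_Lq μ hpq
    (f := fun u => w u ^ p⁻¹ * g u) (g := fun u => w u ^ q⁻¹) (by fun_prop) (by fun_prop)
  simp only [Pi.mul_apply, ← hsplit, hF, hG] at hHolder
  calc (∫⁻ u, w u * g u ∂μ) ^ p
      ≤ ((∫⁻ u, w u * g u ^ p ∂μ) ^ (1 / p) * (∫⁻ u, w u ∂μ) ^ (1 / q)) ^ p :=
        ENNReal.rpow_le_rpow hHolder hpq.nonneg
    _ = (∫⁻ u, w u ∂μ) ^ (p - 1) * ∫⁻ u, w u * g u ^ p ∂μ := by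
        rw [ENNReal.mul_rpow_of_nonneg _ _ hpq.nonneg, ← ENNReal.rpow_mul, ← ENNReal.rpow_mul,
          one_div_mul_cancel hpq.ne_zero, ENNReal.rpow_one, mul_comm]
        rw [one_div_mul_eq_div, hpq.div_conj_eq_sub_one]

theorem lintegral_rpow_lintegral_mul_le {α β : Type*} [MeasurableSpace α] [MeasurableSpace β]
    {μ : Measure α} {ν : Measure β} [SFinite μ] [SFinite ν] {w : α → ℝ≥0∞}
    {g : α → β → ℝ≥0∞} (hw : AEMeasurable w μ) (hw_top : ∀ x, w x ≠ ∞)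
    (hg : AEMeasurable (Function.uncurry g) (μ.prod ν)) (hg' : ∀ y, AEMeasurable (g · y) μ)
    {p : ℝ} (hp : 1 ≤ p) :
    ∫⁻ y, (∫⁻ x, w x * g x y ∂μ) ^ p ∂ν ≤
      (∫⁻ x, w x ∂μ) ^ (p - 1) * ∫⁻ x, w x * ∫⁻ y, g x y ^ p ∂ν ∂μ := by
  have hF : AEMeasurable (fun z : α × β => w z.1 * g z.1 z.2 ^ p) (μ.prod ν) :=
    hw.comp_fst.mul (hg.pow_const p)
  calc ∫⁻ y, (∫⁻ x, w x * g x y ∂μ) ^ p ∂ν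
      ≤ ∫⁻ y, (∫⁻ x, w x ∂μ) ^ (p - 1) * ∫⁻ x, w x * g x y ^ p ∂μ ∂ν :=
        lintegral_mono fun y => lintegral_mul_rpow_le hw (hg' y) hp
    _ = (∫⁻ x, w x ∂μ) ^ (p - 1) * ∫⁻ x, ∫⁻ y, w x * g x y ^ p ∂ν ∂μ := by
        rw [lintegral_const_mul'' _ hF.lintegral_prod_left', lintegral_lintegral_swap hF.prod_swap]
    _ = (∫⁻ x, w x ∂μ) ^ (p - 1) * ∫⁻ x, w x * ∫⁻ y, g x y ^ p ∂ν ∂μ := by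
        simp_rw [lintegral_const_mul' _ _ (hw_top _)]

theorem integral_le_toReal_lintegral_ofReal {α : Type*} [MeasurableSpace α] {μ : Measure α}
    {f : α → ℝ} (hf : 0 ≤ f) : ∫ x, f x ∂μ ≤ (∫⁻ x, ENNReal.ofReal (f x) ∂μ).toReal := by
  by_cases h : AEStronglyMeasurable f μ
  · exact (integral_eq_lintegral_of_nonneg_ae (ae_of_all _ hf) h).le
  · rw [integral_non_aestronglyMeasurable h]
    positivity

theorem MeasureTheory.MemLp.integrable_one_add_norm_rpow {Ω E : Type*} [MeasurableSpace Ω]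
    {P : Measure Ω} [IsFiniteMeasure P] [NormedAddCommGroup E] {f : Ω → E} {r : ℝ} (hr : 0 < r)
    (hf : MemLp f (ENNReal.ofReal r) P) : Integrable (fun ω => (1 + ‖f ω‖) ^ r) P := by
  have hg : MemLp (fun ω => (1 : ℝ) + ‖f ω‖) (ENNReal.ofReal r) P :=
    (memLp_const (1 : ℝ)).add hf.norm
  have h := (integrable_norm_rpow_iff hg.1 (by simpa using hr) ENNReal.ofReal_ne_top).2 hg
  refine h.congr (ae_of_all _ fun ω => ?_)
  simp only [ENNReal.toReal_ofReal hr.le, Real.norm_of_nonneg (by positivity : 0 ≤ 1 + ‖f ω‖)]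

theorem sqrt_sum_sq_eq_norm_toLp {ι : Type*} [Fintype ι] (v : ι → ℝ) :
    √(∑ i, v i ^ 2) = ‖toLp 2 v‖ := by
  simp [EuclideanSpace.norm_eq]

theorem sum_sq_rpow_eq_norm_toLp_rpow {ι : Type*} [Fintype ι] (v : ι → ℝ) (κ : ℝ) :
    (∑ i, v i ^ 2) ^ κ = ‖toLp 2 v‖ ^ (2 * κ) := by
  rw [← sqrt_sum_sq_eq_norm_toLp, Real.sqrt_eq_rpow, ← Real.rpow_mul (by positivity)]
  ring_nf

theorem memLp_toLp_sub_of_forall_integrable_pow {ι Ω : Type*} [Fintype ι] [MeasurableSpace Ω]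
    {P : Measure Ω} [IsFiniteMeasure P] {q : Ω → ι → ℝ} (hq : Measurable q)
    (hmom : ∀ n : ℕ, Integrable (fun ω => √(∑ i, q ω i ^ 2) ^ n) P) (y : ι → ℝ) (r : ℝ) :
    MemLp (fun ω => toLp 2 (q ω - y)) (ENNReal.ofReal r) P := by
  set n := ⌈r⌉₊ + 1
  have hqn : MemLp (fun ω => toLp 2 (q ω)) n P := by
    refine (integrable_norm_rpow_iff ((WithLp.measurable_toLp 2 _).comp hq).aestronglyMeasurable
      (by simp [n]) (by simp)).1 ?_
    simpa [sqrt_sum_sq_eq_norm_toLp] using hmom n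
  simp_rw [WithLp.toLp_sub]
  refine (hqn.sub (memLp_const _)).mono_exponent (ENNReal.ofReal_le_of_le_toReal ?_)
  rw [ENNReal.toReal_natCast]
  exact (Nat.le_ceil r).trans (Nat.cast_le.2 (Nat.le_succ _))

theorem ProbabilityTheory.IsGaussian.lintegral_enorm_rpow_lt_top {E : Type*} [NormedAddCommGroup E]
    [NormedSpace ℝ E] [MeasurableSpace E] [BorelSpace E] [CompleteSpace E]
    [SecondCountableTopology E] (μ : Measure E) [IsGaussian μ] {p : ℝ} (hp : 0 < p) :
    ∫⁻ x, ‖x‖ₑ ^ p ∂μ < ∞ := by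
  simpa [ENNReal.toReal_ofReal hp.le] using lintegral_rpow_enorm_lt_top_of_eLpNorm_lt_top
    (by simpa using hp) ENNReal.ofReal_ne_top
    (IsGaussian.memLp_id μ (ENNReal.ofReal p) ENNReal.ofReal_ne_top).eLpNorm_lt_top

noncomputable def stdGaussianMoment (ι : Type*) [Fintype ι] (p : ℝ) : ℝ≥0∞ :=
  ∫⁻ x, ‖x‖ₑ ^ p ∂stdGaussian (EuclideanSpace ℝ ι)

theorem stdGaussianMoment_lt_top (ι : Type*) [Fintype ι] {p : ℝ} (hp : 0 < p) :
    stdGaussianMoment ι p < ∞ :=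
  IsGaussian.lintegral_enorm_rpow_lt_top _ hp

theorem pi_gaussianReal_eq_map_smul (ι : Type*) [Fintype ι] (V : ℝ≥0) :
    Measure.pi (fun _ : ι => gaussianReal 0 V) =
      (Measure.pi fun _ : ι => gaussianReal 0 1).map (fun x => (NNReal.sqrt V : ℝ) • x) := by
  rw [show (fun x : ι → ℝ => (NNReal.sqrt V : ℝ) • x) =
      fun x i => (NNReal.sqrt V : ℝ) * x i from rfl,
    Measure.pi_map_pi fun _ => by fun_prop]
  congr with i : 1
  rw [gaussianReal_map_const_mul]
  congr 1
  · simp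
  · ext; simp

theorem lintegral_enorm_rpow_of_map_eq_pi_gaussianReal {ι Ω : Type*} [Fintype ι]
    [MeasurableSpace Ω] {P : Measure Ω} {X : Ω → ι → ℝ} (hX : Measurable X) {V : ℝ≥0}
    (hlaw : P.map X = Measure.pi fun _ => gaussianReal 0 V) {p : ℝ} (hp : 0 ≤ p) :
    ∫⁻ ω, ‖toLp 2 (X ω)‖ₑ ^ p ∂P = (NNReal.sqrt V : ℝ≥0∞) ^ p * stdGaussianMoment ι p := by
  have hF : Measurable fun x : ι → ℝ => ‖toLp 2 x‖ₑ ^ p := by fun_prop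
  rw [← lintegral_map hF hX, hlaw, pi_gaussianReal_eq_map_smul, lintegral_map hF (by fun_prop),
    stdGaussianMoment, ← map_pi_eq_stdGaussian, lintegral_map (by fun_prop) (by fun_prop),
    ← lintegral_const_mul' _ _ (ENNReal.rpow_ne_top_of_nonneg hp ENNReal.coe_ne_top)]
  congr with x
  rw [WithLp.toLp_smul, enorm_smul, ENNReal.mul_rpow_of_nonneg _ _ hp, NNReal.enorm_eq]

theorem integral_sub_sq_inv {T s : ℝ} (hs : 0 ≤ s) (hsT : s < T) :
    ∫ u in (0 : ℝ)..s, ((T - u) ^ 2)⁻¹ = (T - s)⁻¹ - T⁻¹ := by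
  have h0 : (0 : ℝ) ∉ Set.uIcc (T - s) T := by
    rw [Set.uIcc_of_le (by linarith)]
    exact fun h => by linarith [h.1]
  have := integral_zpow (n := -2) (Or.inr ⟨by norm_num, h0⟩)
  simp only [zpow_neg, zpow_ofNat] at this
  rw [intervalIntegral.integral_comp_sub_left (fun x => (x ^ 2)⁻¹), sub_zero, this]
  norm_num
  ring

theorem integral_sub_rpow_neg_three_halves {T s : ℝ} (hs : 0 ≤ s) (hsT : s < T) :
    ∫ u in (0 : ℝ)..s, (T - u) ^ (-(3 / 2) : ℝ) =
      2 * ((T - s) ^ (-(1 / 2) : ℝ) - T ^ (-(1 / 2) : ℝ)) := by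
  have h0 : (0 : ℝ) ∉ Set.uIcc (T - s) T := by
    rw [Set.uIcc_of_le (by linarith)]
    exact fun h => by linarith [h.1]
  rw [intervalIntegral.integral_comp_sub_left (fun x => x ^ (-(3 / 2) : ℝ)),
    sub_zero, integral_rpow (Or.inr ⟨by norm_num, h0⟩)]
  norm_num
  ring

theorem lintegral_Ioc_sub_rpow_neg_three_halves {T s : ℝ} (hs : 0 ≤ s) (hsT : s < T) :
    ∫⁻ u in Set.Ioc 0 s, ENNReal.ofReal ((T - u) ^ (-(3 / 2) : ℝ)) =
      ENNReal.ofReal (2 * ((T - s) ^ (-(1 / 2) : ℝ) - T ^ (-(1 / 2) : ℝ))) := by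
  have hint : IntegrableOn (fun u => (T - u) ^ (-(3 / 2) : ℝ)) (Set.Ioc 0 s) := by
    refine (ContinuousOn.integrableOn_Icc ?_).mono_set Set.Ioc_subset_Icc_self
    exact ContinuousOn.rpow_const (by fun_prop) fun u hu => Or.inl (by linarith [hu.2])
  rw [← ofReal_integral_eq_lintegral_ofReal hint (ae_restrict_of_forall_mem measurableSet_Ioc
      fun u hu => Real.rpow_nonneg (by linarith [hu.2]) _),
    ← intervalIntegral.integral_of_le hs, integral_sub_rpow_neg_three_halves hs hsT]

theorem ofReal_rpow_half_mul_sub_rpow_neg_half_le {T s : ℝ} (hs : 0 ≤ s) (hsT : s < T) :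
    ENNReal.ofReal (T - s) ^ (1 / 2 : ℝ) *
      ENNReal.ofReal (2 * ((T - s) ^ (-(1 / 2) : ℝ) - T ^ (-(1 / 2) : ℝ))) ≤ 2 := by
  have hTs : 0 < T - s := by linarith
  rw [ENNReal.ofReal_rpow_of_pos hTs, ← ENNReal.ofReal_mul (by positivity)]
  calc ENNReal.ofReal
        ((T - s) ^ (1 / 2 : ℝ) * (2 * ((T - s) ^ (-(1 / 2) : ℝ) - T ^ (-(1 / 2) : ℝ))))
      ≤ ENNReal.ofReal ((T - s) ^ (1 / 2 : ℝ) * (2 * (T - s) ^ (-(1 / 2) : ℝ))) := by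
        gcongr
        exact sub_le_self _ (Real.rpow_nonneg (by linarith) _)
    _ = 2 := by
        rw [mul_left_comm, ← Real.rpow_add hTs]
        norm_num

noncomputable def bridgeDrift (ν : ℕ) (T : ℝ) (q y : Fin ν → ℝ) (W : ℝ → Fin ν → ℝ) (s : ℝ) :
    Fin ν → ℝ :=
  (T - s)⁻¹ • (y - bridgeBB ν T q y W s)

noncomputable def weightedIncrementIntegral {ν : ℕ} (T : ℝ) (W : ℝ → Fin ν → ℝ) (s : ℝ) : ℝ≥0∞ :=
  ∫⁻ u in Set.Ioc 0 s, ENNReal.ofReal (((T - u) ^ 2)⁻¹) * ‖toLp 2 (W s - W u)‖ₑ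

theorem weightedIncrementIntegral_eq_lintegral_mul {ν : ℕ} {T s : ℝ} (hsT : s < T)
    (W : ℝ → Fin ν → ℝ) :
    weightedIncrementIntegral T W s =
      ∫⁻ u in Set.Ioc 0 s, ENNReal.ofReal ((T - u) ^ (-(3 / 2) : ℝ)) *
        (ENNReal.ofReal ((T - u) ^ (-(1 / 2) : ℝ)) * ‖toLp 2 (W s - W u)‖ₑ) := by
  refine setLIntegral_congr_fun measurableSet_Ioc fun u hu => ?_
  have hTu : 0 < T - u := by linarith [hu.2]
  rw [← mul_assoc, ← ENNReal.ofReal_mul (by positivity), ← Real.rpow_add hTu,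
    show (-(3 / 2) + -(1 / 2) : ℝ) = -((2 : ℕ) : ℝ) by norm_num, Real.rpow_neg hTu.le,
    Real.rpow_natCast]

theorem bridgeDrift_eq {ν : ℕ} {T s : ℝ} (hs : 0 ≤ s) (hsT : s < T) (q y : Fin ν → ℝ)
    {W : ℝ → Fin ν → ℝ} (hW : ContinuousOn W (Set.Icc 0 s)) :
    bridgeDrift ν T q y W s =
      T⁻¹ • (y - q) - T⁻¹ • W s - ∫ u in (0 : ℝ)..s, ((T - u) ^ 2)⁻¹ • (W s - W u) := by
  have hTs : T - s ≠ 0 := by linarith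
  have hT : T ≠ 0 := by linarith
  rw [← Set.uIcc_of_le hs] at hW
  have hφ : ContinuousOn (fun u : ℝ => ((T - u) ^ 2)⁻¹) (Set.uIcc 0 s) :=
    ContinuousOn.inv₀ (by fun_prop) fun u hu => by
      rw [Set.uIcc_of_le hs] at hu; nlinarith [hu.2]
  have hI : ∫ u in (0 : ℝ)..s, ((T - u) ^ 2)⁻¹ • (W s - W u) =
      ((T - s)⁻¹ - T⁻¹) • W s - ∫ u in (0 : ℝ)..s, ((T - u) ^ 2)⁻¹ • W u := by
    have h1 : IntervalIntegrable (fun u => ((T - u) ^ 2)⁻¹ • W s) volume 0 s :=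
      (hφ.smul continuousOn_const).intervalIntegrable
    have h2 : IntervalIntegrable (fun u => ((T - u) ^ 2)⁻¹ • W u) volume 0 s :=
      (hφ.smul hW).intervalIntegrable
    simp_rw [smul_sub]
    rw [intervalIntegral.integral_sub h1 h2, intervalIntegral.integral_smul_const,
      integral_sub_sq_inv hs hsT]
  rw [hI, bridgeDrift, bridgeBB, if_pos hsT]
  match_scalars <;> field_simp
  ring

theorem enorm_bridgeDrift_le {ν : ℕ} {T s : ℝ} (hs : 0 ≤ s) (hsT : s < T) (q y : Fin ν → ℝ)
    {W : ℝ → Fin ν → ℝ} (hW : ContinuousOn W (Set.Icc 0 s)) :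
    ‖toLp 2 (bridgeDrift ν T q y W s)‖ₑ ≤
      ENNReal.ofReal T⁻¹ * ‖toLp 2 (q - y)‖ₑ + ENNReal.ofReal T⁻¹ * ‖toLp 2 (W s)‖ₑ +
        weightedIncrementIntegral T W s := by
  have hT : 0 ≤ T⁻¹ := inv_nonneg.2 (by linarith)
  have hcomm : toLp 2 (∫ u in Set.Ioc 0 s, ((T - u) ^ 2)⁻¹ • (W s - W u)) =
      ∫ u in Set.Ioc 0 s, toLp 2 (((T - u) ^ 2)⁻¹ • (W s - W u)) :=
    ((PiLp.continuousLinearEquiv 2 ℝ fun _ : Fin ν => ℝ).symm.integral_comp_comm _).symm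
  rw [bridgeDrift_eq hs hsT q y hW, intervalIntegral.integral_of_le hs, WithLp.toLp_sub,
    WithLp.toLp_sub, hcomm]
  refine enorm_sub_le.trans (add_le_add (enorm_sub_le.trans (add_le_add ?_ ?_)) ?_)
  · rw [WithLp.toLp_smul, enorm_smul, Real.enorm_of_nonneg hT, WithLp.toLp_sub, WithLp.toLp_sub,
      enorm_sub_rev]
  · rw [WithLp.toLp_smul, enorm_smul, Real.enorm_of_nonneg hT]
  · refine (enorm_integral_le_lintegral_enorm _).trans_eq (lintegral_congr fun u => ?_)
    rw [WithLp.toLp_smul, enorm_smul, Real.enorm_of_nonneg (by positivity)]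

noncomputable def driftMomentConst (ν : ℕ) (κ T : ℝ) : ℝ≥0∞ :=
  3 ^ (2 * κ) * (ENNReal.ofReal T ^ κ * ENNReal.ofReal T⁻¹ ^ (2 * κ) *
      (1 + ENNReal.ofReal T ^ κ * stdGaussianMoment (Fin ν) (2 * κ)) +
    (2 ^ max 1 (2 * κ) * stdGaussianMoment (Fin ν) (max 1 (2 * κ))) ^ (2 * κ / max 1 (2 * κ)))

theorem driftMomentConst_lt_top (ν : ℕ) {κ : ℝ} (hκ : 0 < κ) (T : ℝ) :
    driftMomentConst ν κ T < ∞ := by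
  have h2κ : 0 < 2 * κ := by linarith
  have hp : 0 < max 1 (2 * κ) := lt_max_of_lt_left one_pos
  have := stdGaussianMoment_lt_top (Fin ν) h2κ
  have := stdGaussianMoment_lt_top (Fin ν) hp
  unfold driftMomentConst
  finiteness

namespace IsBrownianMotion

variable {Ω : Type*} [m : MeasurableSpace Ω] {P : Measure Ω} {ν : ℕ} {F : Filtration ℝ m}
  {B : ℝ → Ω → Fin ν → ℝ}

theorem measurable (hB : IsBrownianMotion P ν F B) (t : ℝ) : Measurable (B t) :=
  (hB.adapted t).mono (F.le t) le_rfl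

theorem lintegral_enorm_sub_rpow (hB : IsBrownianMotion P ν F B) {u s : ℝ} (hu : 0 ≤ u)
    (hus : u ≤ s) {p : ℝ} (hp : 0 ≤ p) :
    ∫⁻ ω, ‖toLp 2 (B s ω - B u ω)‖ₑ ^ p ∂P =
      ENNReal.ofReal (s - u) ^ (p / 2) * stdGaussianMoment (Fin ν) p := by
  rw [lintegral_enorm_rpow_of_map_eq_pi_gaussianReal (X := fun ω => B s ω - B u ω)
    ((hB.measurable s).sub (hB.measurable u)) (hB.gaussIncr u s hu hus) hp, NNReal.sqrt_eq_rpow,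
    ENNReal.coe_rpow_of_nonneg _ (by norm_num),
    ← ENNReal.rpow_mul, ENNReal.ofReal, one_div_mul_eq_div]

theorem aemeasurable_enorm_sub (hB : IsBrownianMotion P ν F B) {μ : Measure ℝ} [SFinite μ]
    [SFinite P] (hμ : ∀ᵐ u ∂μ, 0 ≤ u) (s : ℝ) :
    AEMeasurable (fun x : ℝ × Ω => ‖toLp 2 (B s x.2 - B x.1 x.2)‖ₑ) (μ.prod P) := by
  -- paths are only continuous on `[0, ∞)`; `u ↦ B (max u 0) ω` is continuous and agrees there
  have hmax : Measurable fun x : ℝ × Ω => B (max x.1 0) x.2 :=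
    (stronglyMeasurable_uncurry_of_continuous_of_stronglyMeasurable
      (u := fun u ω => B (max u 0) ω)
      (fun ω => (hB.contPaths ω).comp_continuous (continuous_id.max continuous_const)
        fun u => le_max_right u 0)
      fun u => (hB.measurable _).stronglyMeasurable).measurable
  have hBu : AEMeasurable (fun x : ℝ × Ω => B x.1 x.2) (μ.prod P) := by
    refine hmax.aemeasurable.congr ?_
    filter_upwards [Measure.quasiMeasurePreserving_fst.ae hμ] with x hx
    rw [max_eq_left hx]
  have hBs := (hB.measurable s).comp_aemeasurable (measurable_snd.aemeasurable (μ := μ.prod P))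
  exact ((WithLp.measurable_toLp 2 _).comp_aemeasurable (hBs.sub hBu)).enorm

theorem lintegral_rpow_mul_enorm_sub_rpow_le (hB : IsBrownianMotion P ν F B) {T u s : ℝ}
    (hu : 0 ≤ u) (hus : u ≤ s) (hsT : s < T) {p : ℝ} (hp : 0 ≤ p) :
    ∫⁻ ω, (ENNReal.ofReal ((T - u) ^ (-(1 / 2) : ℝ)) * ‖toLp 2 (B s ω - B u ω)‖ₑ) ^ p ∂P ≤
      stdGaussianMoment (Fin ν) p := by
  have hTu : 0 < T - u := by linarith
  simp_rw [ENNReal.mul_rpow_of_nonneg _ _ hp]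
  rw [lintegral_const_mul' _ _ (ENNReal.rpow_ne_top_of_nonneg hp ENNReal.ofReal_ne_top),
    hB.lintegral_enorm_sub_rpow hu hus hp, ← mul_assoc]
  refine mul_le_of_le_one_left zero_le ?_
  rw [ENNReal.ofReal_rpow_of_nonneg (by positivity) hp,
    ENNReal.ofReal_rpow_of_nonneg (by linarith) (by positivity),
    ← ENNReal.ofReal_mul (by positivity), ← Real.rpow_mul hTu.le,
    show -(1 / 2) * p = -(p / 2) by ring, Real.rpow_neg hTu.le, inv_mul_eq_div]
  exact ENNReal.ofReal_le_one.2 (div_le_one_of_le₀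
    (Real.rpow_le_rpow (by linarith) (by linarith) (by positivity)) (by positivity))

theorem aemeasurable_weightedIncrementIntegral (hB : IsBrownianMotion P ν F B) [SFinite P]
    (T s : ℝ) : AEMeasurable (fun ω => weightedIncrementIntegral T (B · ω) s) P := by
  have hweight : Measurable fun x : ℝ × Ω => ENNReal.ofReal (((T - x.1) ^ 2)⁻¹) := by fun_prop
  exact (hweight.aemeasurable.mul (hB.aemeasurable_enorm_sub
    (ae_restrict_of_forall_mem measurableSet_Ioc fun u hu => hu.1.le) s)).lintegral_prod_left'

theorem ofReal_rpow_mul_lintegral_weightedIncrementIntegral_rpow_le_of_one_le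
    (hB : IsBrownianMotion P ν F B) [SFinite P] {T s : ℝ} (hs : 0 ≤ s) (hsT : s < T) {p : ℝ}
    (hp : 1 ≤ p) :
    ENNReal.ofReal (T - s) ^ (p / 2) * ∫⁻ ω, weightedIncrementIntegral T (B · ω) s ^ p ∂P ≤
      2 ^ p * stdGaussianMoment (Fin ν) p := by
  have hp0 : 0 ≤ p := by linarith
  set μ := volume.restrict (Set.Ioc 0 s)
  set M := stdGaussianMoment (Fin ν) p
  set w : ℝ → ℝ≥0∞ := fun u => ENNReal.ofReal ((T - u) ^ (-(3 / 2) : ℝ))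
  set g : ℝ → Ω → ℝ≥0∞ := fun u ω =>
    ENNReal.ofReal ((T - u) ^ (-(1 / 2) : ℝ)) * ‖toLp 2 (B s ω - B u ω)‖ₑ
  set W := ∫⁻ u, w u ∂μ
  have hW : W = ENNReal.ofReal (2 * ((T - s) ^ (-(1 / 2) : ℝ) - T ^ (-(1 / 2) : ℝ))) :=
    lintegral_Ioc_sub_rpow_neg_three_halves hs hsT
  have hsplit : ∀ ω, weightedIncrementIntegral T (B · ω) s = ∫⁻ u, w u * g u ω ∂μ :=
    fun ω => weightedIncrementIntegral_eq_lintegral_mul hsT _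
  have hg : AEMeasurable (Function.uncurry g) (μ.prod P) :=
    (Measurable.aemeasurable (by fun_prop)).mul (hB.aemeasurable_enorm_sub
      (ae_restrict_of_forall_mem measurableSet_Ioc fun u hu => hu.1.le) s)
  have hgω : ∀ ω, AEMeasurable (fun u => g u ω) μ := fun ω =>
    (Measurable.aemeasurable (by fun_prop)).mul ((WithLp.measurable_toLp 2 _).comp_aemeasurable
      (aemeasurable_const.sub (((hB.contPaths ω).mono fun u hu => hu.1.le).aemeasurable
        measurableSet_Ioc))).enorm
  have hw : Measurable w := by fun_prop
  calc ENNReal.ofReal (T - s) ^ (p / 2) * ∫⁻ ω, weightedIncrementIntegral T (B · ω) s ^ p ∂P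
      ≤ ENNReal.ofReal (T - s) ^ (p / 2) * (W ^ (p - 1) * ∫⁻ u, w u * M ∂μ) := by
        simp_rw [hsplit]
        gcongr
        refine (lintegral_rpow_lintegral_mul_le hw.aemeasurable (fun _ => ENNReal.ofReal_ne_top)
          hg hgω hp).trans ?_
        gcongr _ * ?_
        refine setLIntegral_mono' measurableSet_Ioc fun u hu => ?_
        gcongr
        exact hB.lintegral_rpow_mul_enorm_sub_rpow_le hu.1.le hu.2 hsT hp0
    _ = (ENNReal.ofReal (T - s) ^ (1 / 2 : ℝ) * W) ^ p * M := by
        have hWp : W ^ (p - 1) * W = W ^ p := by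
          simpa using (ENNReal.rpow_add_of_nonneg (x := W) (p - 1) 1 (by linarith) zero_le_one).symm
        rw [lintegral_mul_const _ hw, ENNReal.mul_rpow_of_nonneg _ _ hp0, ← ENNReal.rpow_mul,
          one_div_mul_eq_div, ← hWp]
        ring
    _ ≤ 2 ^ p * M := by
        gcongr
        rw [hW]
        exact ofReal_rpow_half_mul_sub_rpow_neg_half_le hs hsT

-- Hölder's inequality needs an exponent `≥ 1`; Jensen's inequality then lowers it to `r`.
theorem ofReal_rpow_mul_lintegral_weightedIncrementIntegral_rpow_le
    (hB : IsBrownianMotion P ν F B) [IsProbabilityMeasure P] {T s : ℝ} (hs : 0 ≤ s)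
    (hsT : s < T) {r : ℝ} (hr : 0 < r) :
    ENNReal.ofReal (T - s) ^ (r / 2) * ∫⁻ ω, weightedIncrementIntegral T (B · ω) s ^ r ∂P ≤
      (2 ^ max 1 r * stdGaussianMoment (Fin ν) (max 1 r)) ^ (r / max 1 r) := by
  set p := max 1 r
  have hp : 0 < p := lt_max_of_lt_left one_pos
  calc ENNReal.ofReal (T - s) ^ (r / 2) * ∫⁻ ω, weightedIncrementIntegral T (B · ω) s ^ r ∂P
      ≤ (ENNReal.ofReal (T - s) ^ (p / 2)) ^ (r / p) *
          (∫⁻ ω, weightedIncrementIntegral T (B · ω) s ^ p ∂P) ^ (r / p) := by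
        rw [← ENNReal.rpow_mul, show p / 2 * (r / p) = r / 2 by field_simp]
        gcongr
        exact lintegral_rpow_le_lintegral_rpow_rpow (hB.aemeasurable_weightedIncrementIntegral T s)
          hr (le_max_right _ _)
    _ ≤ (2 ^ p * stdGaussianMoment (Fin ν) p) ^ (r / p) := by
        rw [← ENNReal.mul_rpow_of_nonneg _ _ (by positivity)]
        exact ENNReal.rpow_le_rpow
          (hB.ofReal_rpow_mul_lintegral_weightedIncrementIntegral_rpow_le_of_one_le hs hsT
            (le_max_left _ _)) (by positivity)

theorem lintegral_enorm_bridgeDrift_rpow_le (hB : IsBrownianMotion P ν F B) {T s : ℝ}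
    (hs : 0 ≤ s) (hsT : s < T) (y : Fin ν → ℝ) {q : Ω → Fin ν → ℝ} (hq : Measurable q) {r : ℝ}
    (hr : 0 ≤ r) :
    ∫⁻ ω, ‖toLp 2 (bridgeDrift ν T (q ω) y (B · ω) s)‖ₑ ^ r ∂P ≤
      3 ^ r * (ENNReal.ofReal T⁻¹ ^ r * ∫⁻ ω, ‖toLp 2 (q ω - y)‖ₑ ^ r ∂P +
        ENNReal.ofReal T⁻¹ ^ r * ∫⁻ ω, ‖toLp 2 (B s ω)‖ₑ ^ r ∂P +
        ∫⁻ ω, weightedIncrementIntegral T (B · ω) s ^ r ∂P) := by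
  have hBs := hB.measurable s
  calc _ ≤ ∫⁻ ω, 3 ^ r * ((ENNReal.ofReal T⁻¹ * ‖toLp 2 (q ω - y)‖ₑ) ^ r +
        (ENNReal.ofReal T⁻¹ * ‖toLp 2 (B s ω)‖ₑ) ^ r +
        weightedIncrementIntegral T (B · ω) s ^ r) ∂P := by
        refine lintegral_mono fun ω => ?_
        refine (ENNReal.rpow_le_rpow ?_ hr).trans (ENNReal.rpow_add_add_le _ _ _ hr)
        exact enorm_bridgeDrift_le hs hsT (q ω) y ((hB.contPaths ω).mono fun u hu => hu.1)
    _ = _ := by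
        simp_rw [ENNReal.mul_rpow_of_nonneg _ _ hr]
        rw [lintegral_const_mul' _ _ (ENNReal.rpow_ne_top_of_nonneg hr ENNReal.ofNat_ne_top),
          lintegral_add_left (by fun_prop), lintegral_add_left (by fun_prop),
          lintegral_const_mul _ (by fun_prop), lintegral_const_mul _ (by fun_prop)]

theorem ofReal_rpow_mul_lintegral_enorm_bridgeDrift_le (hB : IsBrownianMotion P ν F B)
    [IsProbabilityMeasure P] {T s : ℝ} (hs : 0 ≤ s) (hsT : s < T) (y : Fin ν → ℝ)
    {q : Ω → Fin ν → ℝ} (hq : Measurable q) {κ : ℝ} (hκ : 0 < κ) :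
    ENNReal.ofReal (T - s) ^ κ * ∫⁻ ω, ‖toLp 2 (bridgeDrift ν T (q ω) y (B · ω) s)‖ₑ ^ (2 * κ) ∂P ≤
      driftMomentConst ν κ T * ∫⁻ ω, (1 + ‖toLp 2 (q ω - y)‖ₑ) ^ (2 * κ) ∂P := by
  have h2κ : 0 < 2 * κ := by linarith
  set c := ENNReal.ofReal (T - s) ^ κ
  set t := ENNReal.ofReal T⁻¹ ^ (2 * κ)
  set G := stdGaussianMoment (Fin ν) (2 * κ)
  set M := ∫⁻ ω, (1 + ‖toLp 2 (q ω - y)‖ₑ) ^ (2 * κ) ∂P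
  have hM : 1 ≤ M := by
    calc (1 : ℝ≥0∞) = ∫⁻ _, 1 ∂P := by simp
      _ ≤ M := lintegral_mono fun ω => ENNReal.one_le_rpow le_self_add h2κ
  have hc : c ≤ ENNReal.ofReal T ^ κ :=
    ENNReal.rpow_le_rpow (ENNReal.ofReal_le_ofReal (by linarith)) hκ.le
  have hqy : ∫⁻ ω, ‖toLp 2 (q ω - y)‖ₑ ^ (2 * κ) ∂P ≤ M :=
    lintegral_mono fun ω => ENNReal.rpow_le_rpow le_add_self h2κ.le
  have hBs : ∫⁻ ω, ‖toLp 2 (B s ω)‖ₑ ^ (2 * κ) ∂P ≤ ENNReal.ofReal T ^ κ * G := by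
    have h := hB.lintegral_enorm_sub_rpow le_rfl hs h2κ.le
    simp only [hB.start, sub_zero] at h
    rw [h, show 2 * κ / 2 = κ by ring]
    gcongr
  have hℓ := hB.ofReal_rpow_mul_lintegral_weightedIncrementIntegral_rpow_le hs hsT h2κ
  rw [show 2 * κ / 2 = κ by ring] at hℓ
  calc c * ∫⁻ ω, ‖toLp 2 (bridgeDrift ν T (q ω) y (B · ω) s)‖ₑ ^ (2 * κ) ∂P
      ≤ c * (3 ^ (2 * κ) * (t * ∫⁻ ω, ‖toLp 2 (q ω - y)‖ₑ ^ (2 * κ) ∂P +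
          t * ∫⁻ ω, ‖toLp 2 (B s ω)‖ₑ ^ (2 * κ) ∂P +
          ∫⁻ ω, weightedIncrementIntegral T (B · ω) s ^ (2 * κ) ∂P)) := by
        gcongr
        exact hB.lintegral_enorm_bridgeDrift_rpow_le hs hsT y hq h2κ.le
    _ = 3 ^ (2 * κ) * (c * t * ∫⁻ ω, ‖toLp 2 (q ω - y)‖ₑ ^ (2 * κ) ∂P +
          c * t * ∫⁻ ω, ‖toLp 2 (B s ω)‖ₑ ^ (2 * κ) ∂P +
          c * ∫⁻ ω, weightedIncrementIntegral T (B · ω) s ^ (2 * κ) ∂P) := by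
        ring
    _ ≤ 3 ^ (2 * κ) * (ENNReal.ofReal T ^ κ * t * M +
          ENNReal.ofReal T ^ κ * t * (ENNReal.ofReal T ^ κ * G * M) +
          (2 ^ max 1 (2 * κ) * stdGaussianMoment (Fin ν) (max 1 (2 * κ))) ^
            (2 * κ / max 1 (2 * κ)) * M) := by
        gcongr 3 ^ (2 * κ) * (?_ + ?_ + ?_)
        · gcongr
        · gcongr
          exact hBs.trans (le_mul_of_one_le_right zero_le hM)
        · exact hℓ.trans (le_mul_of_one_le_right zero_le hM)
    _ = driftMomentConst ν κ T * M := by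
        rw [driftMomentConst]
        ring

theorem rpow_mul_integral_bridgeDrift_le (hB : IsBrownianMotion P ν F B)
    [IsProbabilityMeasure P] {T s : ℝ} (hs : 0 ≤ s) (hsT : s ≤ T) (y : Fin ν → ℝ)
    {q : Ω → Fin ν → ℝ} (hq : Measurable q) {κ : ℝ} (hκ : 0 < κ)
    (hint : Integrable (fun ω => (1 + ‖toLp 2 (q ω - y)‖) ^ (2 * κ)) P) :
    (T - s) ^ κ * ∫ ω, (∑ i, bridgeDrift ν T (q ω) y (B · ω) s i ^ 2) ^ κ ∂P ≤
      (driftMomentConst ν κ T).toReal * ∫ ω, (1 + ‖toLp 2 (q ω - y)‖) ^ (2 * κ) ∂P := by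
  rcases hsT.lt_or_eq with hsT | rfl
  swap
  · rw [sub_self, Real.zero_rpow hκ.ne', zero_mul]
    exact mul_nonneg ENNReal.toReal_nonneg (integral_nonneg fun ω => by positivity)
  have h2κ : 0 ≤ 2 * κ := by linarith
  have hofReal : ∀ x : EuclideanSpace ℝ (Fin ν),
      ENNReal.ofReal (‖x‖ ^ (2 * κ)) = ‖x‖ₑ ^ (2 * κ) := fun x => by
    rw [← ENNReal.ofReal_rpow_of_nonneg (norm_nonneg _) h2κ, ofReal_norm]
  have hofReal' : ∀ x : EuclideanSpace ℝ (Fin ν),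
      ENNReal.ofReal ((1 + ‖x‖) ^ (2 * κ)) = (1 + ‖x‖ₑ) ^ (2 * κ) := fun x => by
    rw [← ENNReal.ofReal_rpow_of_nonneg (by positivity) h2κ, ENNReal.ofReal_add zero_le_one
      (norm_nonneg _), ENNReal.ofReal_one, ofReal_norm]
  have hM := hint.lintegral_lt_top
  simp_rw [hofReal'] at hM
  simp_rw [sum_sq_rpow_eq_norm_toLp_rpow]
  rw [integral_eq_lintegral_of_nonneg_ae (ae_of_all _ fun ω => by positivity)
    hint.aestronglyMeasurable]
  simp_rw [hofReal']
  calc (T - s) ^ κ * ∫ ω, ‖toLp 2 (bridgeDrift ν T (q ω) y (B · ω) s)‖ ^ (2 * κ) ∂P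
      ≤ (T - s) ^ κ *
          (∫⁻ ω, ‖toLp 2 (bridgeDrift ν T (q ω) y (B · ω) s)‖ₑ ^ (2 * κ) ∂P).toReal := by
        gcongr
        -- measurability in `ω` is not needed: a non-integrable integrand has integral `0`
        simp_rw [← hofReal]
        exact integral_le_toReal_lintegral_ofReal fun ω => by positivity
    _ = (ENNReal.ofReal (T - s) ^ κ *
          ∫⁻ ω, ‖toLp 2 (bridgeDrift ν T (q ω) y (B · ω) s)‖ₑ ^ (2 * κ) ∂P).toReal := by
        rw [ENNReal.toReal_mul, ENNReal.ofReal_rpow_of_nonneg (by linarith) hκ.le,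
          ENNReal.toReal_ofReal (Real.rpow_nonneg (by linarith) _)]
    _ ≤ (driftMomentConst ν κ T * ∫⁻ ω, (1 + ‖toLp 2 (q ω - y)‖ₑ) ^ (2 * κ) ∂P).toReal :=
        ENNReal.toReal_mono (ENNReal.mul_ne_top (driftMomentConst_lt_top ν hκ T).ne hM.ne)
          (hB.ofReal_rpow_mul_lintegral_enorm_bridgeDrift_le hs hsT y hq hκ)
    _ = _ := ENNReal.toReal_mul

end IsBrownianMotion

theorem statement10_general (ν : ℕ) (κ T : ℝ) (hκ : 0 < κ) (hT : 0 < T) :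
    ∃ C : ℝ, 0 < C ∧
      ∀ (Ω : Type) (m : MeasurableSpace Ω) (P : Measure Ω), IsProbabilityMeasure P →
        ∀ (F : Filtration ℝ m) (B : ℝ → Ω → Fin ν → ℝ), IsBrownianMotion P ν F B →
          ∀ (y : Fin ν → ℝ) (q : Ω → Fin ν → ℝ), Measurable[F 0] q →
            (∀ n : ℕ, Integrable (fun ω => Real.sqrt (∑ i, q ω i ^ 2) ^ n) P) →
            (∫ s in (0 : ℝ)..T, (T - s) ^ κ *
                ∫ ω, (∑ i,
                    ((T - s)⁻¹ • (y - bridgeBB ν T (q ω) y (fun u => B u ω) s)) i ^ 2) ^ κ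
                  ∂P) ≤
              C * ∫ ω, (1 + Real.sqrt (∑ i, (q ω i - y i) ^ 2)) ^ (2 * κ) ∂P := by
  set K := (driftMomentConst ν κ T).toReal
  refine ⟨T * K + 1, by positivity, ?_⟩
  intro Ω m P hP F B hB y q hq hqmom
  have hqm : Measurable q := hq.mono (F.le 0) le_rfl
  have hint := MemLp.integrable_one_add_norm_rpow (by positivity)
    (memLp_toLp_sub_of_forall_integrable_pow hqm hqmom y (2 * κ))
  have hnorm : ∀ ω, √(∑ i, (q ω i - y i) ^ 2) = ‖toLp 2 (q ω - y)‖ :=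
    fun ω => sqrt_sum_sq_eq_norm_toLp (q ω - y)
  simp_rw [hnorm]
  set M := ∫ ω, (1 + ‖toLp 2 (q ω - y)‖) ^ (2 * κ) ∂P
  have hbound : ∀ s ∈ Set.uIoc 0 T, ‖(T - s) ^ κ * ∫ ω,
      (∑ i, ((T - s)⁻¹ • (y - bridgeBB ν T (q ω) y (fun u => B u ω) s)) i ^ 2) ^ κ ∂P‖ ≤ K * M := by
    intro s hs
    rw [Set.uIoc_of_le hT.le] at hs
    rw [Real.norm_of_nonneg (mul_nonneg (Real.rpow_nonneg (by linarith [hs.2]) _)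
      (integral_nonneg fun ω => by positivity))]
    exact hB.rpow_mul_integral_bridgeDrift_le hs.1.le hs.2 y hqm hκ hint
  calc _ ≤ K * M * |T - 0| := (Real.le_norm_self _).trans
        (intervalIntegral.norm_integral_le_of_norm_le_const hbound)
    _ ≤ (T * K + 1) * M := by
        have hM : 0 ≤ M := integral_nonneg fun ω => by positivity
        rw [sub_zero, abs_of_pos hT]
        nlinarith

/-- For every `κ > 0` there is a constant `C = C(ν,κ,T) > 0`, depending
only on `ν`, `κ` and `T`, such that for every filtered probability space carrying a
`ν`-dimensional Brownian motion, every `y` and every `ℱ₀`-measurable `q` with all moments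
finite, the drift `Y_s = (y − b_s)/(T−s)` of the bridge from `q` to `y` in time `T`
satisfies `∫₀ᵀ (T−s)^κ E[|Y_s|^{2κ}] ds ≤ C · E[(1+|q−y|)^{2κ}]` (Euclidean norms, and
`|Y_s|^{2κ} = (∑ᵢ Y_s(i)²)^κ`). -/
theorem statement10 (ν : ℕ) (hν : 0 < ν) (κ T : ℝ) (hκ : 0 < κ) (hT : 0 < T) :
    ∃ C : ℝ, 0 < C ∧
      ∀ (Ω : Type) (m : MeasurableSpace Ω) (P : Measure Ω), IsProbabilityMeasure P →
        ∀ (F : Filtration ℝ m) (B : ℝ → Ω → Fin ν → ℝ), IsBrownianMotion P ν F B →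
          ∀ (y : Fin ν → ℝ) (q : Ω → Fin ν → ℝ), Measurable[F 0] q →
            (∀ n : ℕ, Integrable (fun ω => Real.sqrt (∑ i, q ω i ^ 2) ^ n) P) →
            (∫ s in (0 : ℝ)..T, (T - s) ^ κ *
                ∫ ω, (∑ i,
                    ((T - s)⁻¹ • (y - bridgeBB ν T (q ω) y (fun u => B u ω) s)) i ^ 2) ^ κ
                  ∂P) ≤
              C * ∫ ω, (1 + Real.sqrt (∑ i, (q ω i - y i) ^ 2)) ^ (2 * κ) ∂P :=
  statement10_general ν κ T hκ hT
end
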